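/- arXiv:2308.02274 — 2 statements merged into one kernel-verified Lean document; each statement's English description precedes it below -/
import Mathlib

section
/- For any hierarchical network D with N^b_D ≠ ∅, the Gately value of the strong successor representation σ_D equals ξ(D), where ξ_i(D) = s^a_D(i) + (s^b_D(i) / Σ_{j∈N^b_D} p_D(j)) · n^b_D. -/
open Finset

variable {V : Type*} [Fintype V] [DecidableEq V]

/-- Set of predecessors of node `j` in network `D`. -/
def predSet (D : V → Finset V) (j : V) : Finset V :=
  Finset.univ.filter (fun i => j ∈ D i)

/-- Number of predecessors of `j`. -/
def pD (D : V → Finset V) (j : V) : ℕ := (predSet D j).card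

/-- Nodes with exactly one predecessor. -/
def NaD (D : V → Finset V) : Finset V := Finset.univ.filter (fun j => pD D j = 1)

/-- Nodes with at least two predecessors. -/
def NbD (D : V → Finset V) : Finset V := Finset.univ.filter (fun j => 2 ≤ pD D j)

/-- Nodes with at least one predecessor. -/
def ND (D : V → Finset V) : Finset V := Finset.univ.filter (fun j => 1 ≤ pD D j)

/-- Successors of a coalition `H`. -/
def succOf (D : V → Finset V) (H : Finset V) : Finset V := H.biUnion D

/-- Successor representation (successor game). -/
def sD (D : V → Finset V) (H : Finset V) : ℕ := (succOf D H).card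

/-- Strong successor representation (conservative successor game). -/
def sigmaD (D : V → Finset V) (H : Finset V) : ℕ :=
  (Finset.univ.filter (fun j => (predSet D j).Nonempty ∧ predSet D j ⊆ H)).card

/-- Number of successors of `i` having a unique predecessor. -/
def saD (D : V → Finset V) (i : V) : ℕ := (D i ∩ NaD D).card

/-- Number of successors of `i` having multiple predecessors. -/
def sbD (D : V → Finset V) (i : V) : ℕ := (D i ∩ NbD D).card

lemma mem_predSet {D : V → Finset V} {i j : V} : i ∈ predSet D j ↔ j ∈ D i := by
  simp [predSet]

lemma sigma_singleton (D : V → Finset V) (i : V) : sigmaD D {i} = saD D i := by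
  unfold sigmaD saD
  congr 1
  ext j
  simp only [mem_filter, mem_univ, true_and, mem_inter, NaD]
  constructor
  · rintro ⟨hne, hsub⟩
    have h : predSet D j = {i} := by
      rcases Finset.subset_singleton_iff.mp hsub with h | h
      · exact absurd h (Finset.nonempty_iff_ne_empty.mp hne)
      · exact h
    refine ⟨mem_predSet.mp (h ▸ Finset.mem_singleton_self i), ?_⟩
    simp [pD, h]
  · rintro ⟨hij, hp⟩
    have hi : i ∈ predSet D j := mem_predSet.mpr hij
    have h : predSet D j = {i} := by
      obtain ⟨a, ha⟩ := Finset.card_eq_one.mp hp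
      rw [ha] at hi ⊢
      simp_all
    exact ⟨h ▸ Finset.singleton_nonempty i, h ▸ Finset.Subset.refl _⟩

lemma sigma_univ (D : V → Finset V) : sigmaD D Finset.univ = (ND D).card := by
  unfold sigmaD ND
  congr 1
  ext j
  simp only [mem_filter, mem_univ, true_and, Finset.subset_univ, and_true]
  exact Finset.card_pos.symm

lemma ND_card_split (D : V → Finset V) (i : V) :
    (ND D).card = sigmaD D (Finset.univ \ {i}) + (saD D i + sbD D i) := by
  classical
  have h1 : (ND D).filter (fun j => i ∉ predSet D j)
      = Finset.univ.filter (fun j => (predSet D j).Nonempty ∧ predSet D j ⊆ Finset.univ \ {i}) := by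
    ext j
    simp only [mem_filter, ND, mem_univ, true_and]
    constructor
    · rintro ⟨h1, h2⟩
      refine ⟨Finset.card_pos.mp h1, fun k hk => ?_⟩
      simp only [Finset.mem_sdiff, Finset.mem_univ, Finset.mem_singleton, true_and]
      rintro rfl; exact h2 hk
    · rintro ⟨h1, h2⟩
      refine ⟨Finset.card_pos.mpr h1, fun hi => ?_⟩
      have := h2 hi
      exact absurd this (by simp)
  have h2 : (ND D).filter (fun j => i ∈ predSet D j) = D i ∩ ND D := by
    ext j
    simp only [mem_filter, mem_inter, ND, mem_univ, true_and, mem_predSet]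
    constructor
    · rintro ⟨h1, h2⟩; exact ⟨h2, by simp [ND, h1]⟩
    · rintro ⟨h1, h2⟩
      exact ⟨h2, h1⟩
  have h3 : D i ∩ ND D = (D i ∩ NaD D) ∪ (D i ∩ NbD D) := by
    ext j
    simp only [mem_inter, mem_union, NaD, NbD, ND, mem_filter, mem_univ, true_and]
    by_cases hj : j ∈ D i <;> simp [hj] <;> omega
  have h4 : Disjoint (D i ∩ NaD D) (D i ∩ NbD D) := by
    rw [Finset.disjoint_left]
    intro a ha hb
    simp only [mem_inter, NaD, NbD, mem_filter, mem_univ, true_and] at ha hb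
    omega
  have key := Finset.card_filter_add_card_filter_not
    (s := ND D) (p := fun j => i ∈ predSet D j)
  rw [h2] at key
  have h5 : (ND D).filter (fun j => ¬ i ∈ predSet D j) = (ND D).filter (fun j => i ∉ predSet D j) := rfl
  rw [h5, h1] at key
  unfold sigmaD saD sbD
  rw [← key, h3, Finset.card_union_of_disjoint h4]
  ring

lemma sum_card_inter (D : V → Finset V) (S : Finset V) :
    ∑ j : V, (D j ∩ S).card = ∑ k ∈ S, pD D k := by
  have h : ∀ j, (D j ∩ S).card = ∑ k ∈ S, if k ∈ D j then 1 else 0 := by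
    intro j
    rw [← Finset.card_filter]
    congr 1
    ext k
    simp [and_comm]
  simp only [h]
  rw [Finset.sum_comm]
  refine Finset.sum_congr rfl fun k _ => ?_
  rw [← Finset.card_filter]
  rfl

lemma ND_card_eq (D : V → Finset V) : (ND D).card = (NaD D).card + (NbD D).card := by
  have h : ND D = NaD D ∪ NbD D := by
    ext j
    simp only [ND, NaD, NbD, mem_union, mem_filter, mem_univ, true_and]
    omega
  have hd : Disjoint (NaD D) (NbD D) := by
    rw [Finset.disjoint_left]
    intro a ha hb
    simp only [NaD, NbD, mem_filter, mem_univ, true_and] at ha hb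
    omega
  rw [h, Finset.card_union_of_disjoint hd]

lemma sum_pD_NaD (D : V → Finset V) : ∑ k ∈ NaD D, pD D k = (NaD D).card := by
  rw [Finset.card_eq_sum_ones]
  refine Finset.sum_congr rfl fun k hk => ?_
  simp only [NaD, mem_filter] at hk
  exact hk.2

/-- The Gately value of the strong successor representation equals the Gately power measure. -/
theorem gately_of_sigma (D : V → Finset V) (hD : ∀ i, i ∉ D i)
    (hb : (NbD D).Nonempty) (i : V) :
    (sigmaD D {i} : ℝ) +
      ((((sigmaD D Finset.univ : ℝ) - (sigmaD D (Finset.univ \ {i}) : ℝ)) - (sigmaD D {i} : ℝ)) /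
        (∑ j : V, (((sigmaD D Finset.univ : ℝ) - (sigmaD D (Finset.univ \ {j}) : ℝ)) - (sigmaD D {j} : ℝ)))) *
      ((sigmaD D Finset.univ : ℝ) - ∑ j : V, (sigmaD D {j} : ℝ))
    = (saD D i : ℝ) + ((sbD D i : ℝ) / (∑ j ∈ NbD D, (pD D j : ℝ))) * ((NbD D).card : ℝ) := by
  have hM : ∀ j : V, ((sigmaD D Finset.univ : ℝ) - (sigmaD D (Finset.univ \ {j}) : ℝ)) - (sigmaD D {j} : ℝ)
      = (sbD D j : ℝ) := by
    intro j
    have h := ND_card_split D j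
    rw [sigma_univ, sigma_singleton, h]
    push_cast
    ring
  have hsum : (∑ j : V, (((sigmaD D Finset.univ : ℝ) - (sigmaD D (Finset.univ \ {j}) : ℝ)) - (sigmaD D {j} : ℝ)))
      = ∑ j ∈ NbD D, (pD D j : ℝ) := by
    simp only [hM]
    have := sum_card_inter D (NbD D)
    have h2 : ∑ j : V, (sbD D j : ℝ) = ((∑ j : V, sbD D j : ℕ) : ℝ) := by push_cast; rfl
    rw [h2]
    unfold sbD
    rw [this]
    push_cast; rfl
  have hgrand : (sigmaD D Finset.univ : ℝ) - ∑ j : V, (sigmaD D {j} : ℝ) = ((NbD D).card : ℝ) := by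
    simp only [sigma_singleton, sigma_univ]
    have h1 : ∑ j : V, (saD D j : ℝ) = ((NaD D).card : ℝ) := by
      have := sum_card_inter D (NaD D)
      have h2 : ∑ j : V, (saD D j : ℝ) = ((∑ j : V, saD D j : ℕ) : ℝ) := by push_cast; rfl
      rw [h2]
      unfold saD
      rw [this, sum_pD_NaD]
    rw [h1, ND_card_eq]
    push_cast; ring
  rw [hsum, hgrand, hM i, sigma_singleton]
end

section
/- If D is a weakly regular hierarchical network, i.e., all nodes in N^b_D have the same number p of predecessors, then the Gately power gauge ξ(D), with ξ_i(D) = s^a_D(i) + (1/p)·s^b_D(i), is a Core power gauge: Σ_{i∈H} ξ_i(D) ≥ σ_D(H) for every H ⊆ N. -/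
open Finset

variable {V : Type*} [Fintype V] [DecidableEq V]

lemma double_count (D : V → Finset V) (S H : Finset V) :
    ∑ i ∈ H, (D i ∩ S).card = ∑ j ∈ S, ((predSet D j) ∩ H).card := by
  have h1 : ∀ i, (D i ∩ S).card = ∑ j ∈ S, (if j ∈ D i then 1 else 0) := by
    intro i
    have : D i ∩ S = S.filter (fun j => j ∈ D i) := by
      ext j; simp [and_comm]
    rw [this, Finset.card_filter]
  have h2 : ∀ j, ((predSet D j) ∩ H).card = ∑ i ∈ H, (if j ∈ D i then 1 else 0) := by
    intro j
    have : predSet D j ∩ H = H.filter (fun i => j ∈ D i) := by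
      ext i; simp [predSet, and_comm]
    rw [this, Finset.card_filter]
  simp only [h1, h2]
  exact Finset.sum_comm

/-- For weakly regular networks, the Gately power gauge is a Core power gauge. -/
theorem gately_core_of_weakly_regular (D : V → Finset V) (hD : ∀ i, i ∉ D i)
    (p : ℕ) (hp : 2 ≤ p) (hreg : ∀ j ∈ NbD D, pD D j = p) (H : Finset V) :
    (sigmaD D H : ℝ) ≤ ∑ i ∈ H, ((saD D i : ℝ) + (1 / (p : ℝ)) * (sbD D i : ℝ)) := by
  classical
  set A := (NaD D).filter (fun j => (predSet D j).Nonempty ∧ predSet D j ⊆ H) with hA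
  set B := (NbD D).filter (fun j => (predSet D j).Nonempty ∧ predSet D j ⊆ H) with hB
  -- sigmaD D H = A.card + B.card
  have hdisj : Disjoint A B := by
    apply Finset.disjoint_filter_filter
    simp only [NaD, NbD, Finset.disjoint_filter]
    intro j _ h1
    simp [h1]
  have hsplit : sigmaD D H = A.card + B.card := by
    rw [show sigmaD D H = (A ∪ B).card from ?_, Finset.card_union_of_disjoint hdisj]
    · rw [sigmaD]
      congr 1
      ext j
      simp only [hA, hB, Finset.mem_union, Finset.mem_filter, NaD, NbD, pD,
        Finset.mem_univ, true_and, sigmaD]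
      constructor
      · rintro ⟨hne, hsub⟩
        have hcard : 1 ≤ (predSet D j).card := Finset.card_pos.mpr hne
        rcases eq_or_lt_of_le hcard with h | h
        · exact Or.inl ⟨Finset.mem_filter.mpr ⟨Finset.mem_univ _, h.symm⟩, hne, hsub⟩
        · exact Or.inr ⟨Finset.mem_filter.mpr ⟨Finset.mem_univ _, h⟩, hne, hsub⟩
      · rintro (⟨_, h⟩ | ⟨_, h⟩) <;> exact h
  -- bound A.card
  have hAbound : A.card ≤ ∑ i ∈ H, saD D i := by
    have : ∑ i ∈ H, saD D i = ∑ j ∈ NaD D, ((predSet D j) ∩ H).card :=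
      double_count D (NaD D) H
    rw [this]
    calc A.card = ∑ j ∈ A, 1 := by simp
    _ ≤ ∑ j ∈ A, ((predSet D j) ∩ H).card := by
        apply Finset.sum_le_sum
        intro j hj
        simp only [hA, Finset.mem_filter] at hj
        have := hj.2.2
        rw [Finset.inter_eq_left.mpr this]
        exact Finset.card_pos.mpr hj.2.1
    _ ≤ ∑ j ∈ NaD D, ((predSet D j) ∩ H).card :=
        Finset.sum_le_sum_of_subset (Finset.filter_subset _ _)
  -- bound B.card
  have hBbound : p * B.card ≤ ∑ i ∈ H, sbD D i := by
    have : ∑ i ∈ H, sbD D i = ∑ j ∈ NbD D, ((predSet D j) ∩ H).card :=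
      double_count D (NbD D) H
    rw [this]
    calc p * B.card = ∑ j ∈ B, p := by rw [Finset.sum_const, smul_eq_mul, mul_comm]
    _ ≤ ∑ j ∈ B, ((predSet D j) ∩ H).card := by
        apply Finset.sum_le_sum
        intro j hj
        simp only [hB, Finset.mem_filter] at hj
        rw [Finset.inter_eq_left.mpr hj.2.2]
        exact le_of_eq (hreg j hj.1).symm
    _ ≤ ∑ j ∈ NbD D, ((predSet D j) ∩ H).card :=
        Finset.sum_le_sum_of_subset (Finset.filter_subset _ _)
  have hppos : (0 : ℝ) < p := by positivity
  have hA' : (A.card : ℝ) ≤ ∑ i ∈ H, (saD D i : ℝ) := by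
    exact_mod_cast hAbound
  have hB' : (B.card : ℝ) ≤ ∑ i ∈ H, (1 / (p : ℝ)) * (sbD D i : ℝ) := by
    rw [← Finset.mul_sum]
    rw [div_mul_eq_mul_div, one_mul, le_div_iff₀ hppos, mul_comm]
    exact_mod_cast hBbound
  rw [hsplit]
  push_cast
  rw [Finset.sum_add_distrib]
  exact add_le_add hA' hB'
end
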